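/- If F and G are distribution functions on [0,∞) that are both generalized long-tailed (i.e., for every t ≠ 0, limsup_{x→∞} F̄(x−t)/F̄(x) < ∞), and X, Y are nonnegative random variables with P[max(X,Y) > x] ~ F̄(x) + Ḡ(x) as x→∞, then the distribution of max(X,Y) is generalized long-tailed. -/
import Mathlib


open Filter MeasureTheory

/-- Tail of (the distribution of) a random variable `X`. -/
noncomputable def rtail {Ω : Type*} [MeasurableSpace Ω] (μ : Measure Ω) (X : Ω → ℝ) (x : ℝ) : ℝ :=
  (μ {ω | x < X ω}).toReal

/-- The positively decreasing class `𝒫𝒟`. -/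
def PosDec (T : ℝ → ℝ) : Prop :=
  ∀ v : ℝ, 1 < v → limsup (fun x => T (v * x) / T x) atTop < 1

/-- The generalized long-tailed class `𝒪ℒ`. -/
def GenLong (T : ℝ → ℝ) : Prop :=
  ∀ t : ℝ, t ≠ 0 → IsBoundedUnder (· ≤ ·) atTop (fun x => T (x - t) / T x)

/-- The long-tailed class `ℒ`. -/
def LongTailed (T : ℝ → ℝ) : Prop :=
  ∀ t : ℝ, Tendsto (fun x => T (x - t) / T x) atTop (nhds 1)

/-- The dominatedly varying class `𝒟`. -/
def DomVar (T : ℝ → ℝ) : Prop :=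
  ∀ b : ℝ, 0 < b → b < 1 → IsBoundedUnder (· ≤ ·) atTop (fun x => T (b * x) / T x)

/-- Strong asymptotic independence with constant `C`:
`P[X > x, Y > y] ~ C ⋅ F̄(x) ⋅ Ḡ(y)` as `(x, y) → (∞, ∞)`. -/
def SAI {Ω : Type*} [MeasurableSpace Ω] (μ : Measure Ω) (X Y : Ω → ℝ) (C : ℝ) : Prop :=
  Tendsto
    (fun p : ℝ × ℝ =>
      (μ {ω | p.1 < X ω ∧ p.2 < Y ω}).toReal / (rtail μ X p.1 * rtail μ Y p.2))
    (atTop ×ˢ atTop) (nhds C)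

lemma rtail_nonneg {Ω : Type*} [MeasurableSpace Ω] (μ : Measure Ω) (X : Ω → ℝ) (x : ℝ) :
    0 ≤ rtail μ X x := ENNReal.toReal_nonneg

lemma rtail_anti {Ω : Type*} [MeasurableSpace Ω] (μ : Measure Ω) [IsProbabilityMeasure μ]
    (X : Ω → ℝ) : Antitone (rtail μ X) := by
  intro a b hab
  exact ENNReal.toReal_mono (measure_ne_top μ _)
    (measure_mono (fun ω hω => lt_of_le_of_lt hab hω))

lemma rtail_max_le {Ω : Type*} [MeasurableSpace Ω] (μ : Measure Ω) [IsProbabilityMeasure μ]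
    (X Y : Ω → ℝ) (x : ℝ) :
    rtail μ (fun ω => max (X ω) (Y ω)) x ≤ rtail μ X x + rtail μ Y x := by
  have hset : {ω | x < max (X ω) (Y ω)} = {ω | x < X ω} ∪ {ω | x < Y ω} := by
    ext ω; simp [lt_max_iff, Set.mem_union, Set.mem_setOf_eq]
  unfold rtail
  rw [hset, ← ENNReal.toReal_add (measure_ne_top μ _) (measure_ne_top μ _)]
  exact ENNReal.toReal_mono (by simp [ENNReal.add_ne_top, measure_ne_top])
    (measure_union_le _ _)

/-- Key: from GenLong + nonneg + antitone, extract an eventual linear bound. -/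
lemma genLong_bound {T : ℝ → ℝ} (hanti : Antitone T) (hpos : ∀ x, 0 ≤ T x)
    (hT : GenLong T) {t : ℝ} (ht : t ≠ 0) :
    ∃ b : ℝ, 0 ≤ b ∧ ∀ᶠ x in atTop, T (x - t) ≤ b * T x := by
  by_cases hall : ∀ x, 0 < T x
  · obtain ⟨b, hb⟩ := hT t ht
    rw [eventually_map] at hb
    refine ⟨max b 0, le_max_right _ _, ?_⟩
    filter_upwards [hb] with x hx
    have hTx := hall x
    calc T (x - t) = (T (x - t) / T x) * T x := by field_simp
      _ ≤ max b 0 * T x := by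
          apply mul_le_mul_of_nonneg_right (le_trans hx (le_max_left _ _)) (hpos x)
  · push_neg at hall
    obtain ⟨x0, hx0⟩ := hall
    have hz : T x0 = 0 := le_antisymm hx0 (hpos x0)
    refine ⟨1, zero_le_one, ?_⟩
    filter_upwards [eventually_ge_atTop (x0 + t)] with x hx
    have : T (x - t) = 0 := le_antisymm (hz ▸ hanti (by linarith)) (hpos _)
    rw [this, one_mul]; exact hpos x

theorem stmt1 {Ω : Type*} [MeasurableSpace Ω] (μ : Measure Ω) [IsProbabilityMeasure μ]
    (X Y : Ω → ℝ) (hX : ∀ ω, 0 ≤ X ω) (hY : ∀ ω, 0 ≤ Y ω)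
    (hF : GenLong (rtail μ X)) (hG : GenLong (rtail μ Y))
    (hmax : Tendsto
      (fun x => rtail μ (fun ω => max (X ω) (Y ω)) x / (rtail μ X x + rtail μ Y x))
      atTop (nhds 1)) :
    GenLong (rtail μ (fun ω => max (X ω) (Y ω))) := by
  set H := rtail μ (fun ω => max (X ω) (Y ω)) with hH
  set F := rtail μ X with hFdef
  set G := rtail μ Y with hGdef
  have hHanti : Antitone H := rtail_anti μ _
  have hHpos : ∀ x, 0 ≤ H x := rtail_nonneg μ _
  have hFpos : ∀ x, 0 ≤ F x := rtail_nonneg μ _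
  have hGpos : ∀ x, 0 ≤ G x := rtail_nonneg μ _
  intro t ht
  rcases lt_or_gt_of_ne ht with htneg | htpos
  · -- t < 0 : x ≤ x - t, ratio ≤ 1
    refine ⟨1, eventually_map.mpr ?_⟩
    filter_upwards with x
    exact div_le_one_of_le₀ (hHanti (by linarith)) (hHpos x)
  · -- t > 0
    obtain ⟨bF, hbF0, hbF⟩ := genLong_bound (rtail_anti μ X) (rtail_nonneg μ X) hF ht
    obtain ⟨bG, hbG0, hbG⟩ := genLong_bound (rtail_anti μ Y) (rtail_nonneg μ Y) hG ht
    -- eventually H x / (F x + G x) > 1/2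
    have hhalf : ∀ᶠ x in atTop, (1:ℝ)/2 < H x / (F x + G x) := by
      have : {r : ℝ | (1:ℝ)/2 < r} ∈ nhds (1:ℝ) := lt_mem_nhds (by norm_num)
      exact hmax.eventually this
    set B := max bF bG with hB
    refine ⟨2 * B, eventually_map.mpr ?_⟩
    filter_upwards [hbF, hbG, hhalf] with x hxF hxG hxh
    have hFGpos : 0 < F x + G x := by
      by_contra h
      push_neg at h
      have : F x + G x = 0 := le_antisymm h (add_nonneg (hFpos x) (hGpos x))
      rw [this, div_zero] at hxh; norm_num at hxh
    have hHx : (1/2) * (F x + G x) < H x := by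
      rw [div_lt_div_iff₀ (by norm_num) hFGpos] at hxh
      linarith
    have hHxpos : 0 < H x := lt_of_le_of_lt (by nlinarith [hFpos x, hGpos x]) hHx
    have hnum : H (x - t) ≤ 2 * B * H x := by
      calc H (x - t) ≤ F (x - t) + G (x - t) := rtail_max_le μ X Y (x - t)
        _ ≤ bF * F x + bG * G x := add_le_add hxF hxG
        _ ≤ B * F x + B * G x := by
            apply add_le_add
            · exact mul_le_mul_of_nonneg_right (le_max_left _ _) (hFpos x)
            · exact mul_le_mul_of_nonneg_right (le_max_right _ _) (hGpos x)
        _ = B * (F x + G x) := by ring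
        _ ≤ B * (2 * H x) := by
            apply mul_le_mul_of_nonneg_left (by linarith) (le_trans hbF0 (le_max_left _ _))
        _ = 2 * B * H x := by ring
    exact (div_le_iff₀ hHxpos).mpr hnum
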